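/- With ν(k, n, r) the coefficient of x^{n−k−1} y^{k−1} in (x+y)^r (x²+y²)^{(n−2−r)/2}, one has the bounds C(⌊(n−2)/2⌋; ⌊(k−1)/2⌋, ⌊(n−k−1)/2⌋) ≤ ν(k, n, r) ≤ C(n−2, k−1) for all admissible r. -/

import Mathlib

/-!
Since `(x + y)² = (x² + y²) + 2xy` has nonnegative coefficients, trading a factor `x² + y²` for
`(x + y)²` can only increase coefficients, so `ν(k, n, r)` is nondecreasing along `r ≡ n (mod 2)`.
The bounds are its values at the two ends. At `r = n - 2` it is a coefficient of `(x + y)^(n-2)`.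
At the minimal `r ∈ {0, 1}`, the substitution `(x, y) ↦ (x², y²)` turns `(x + y)^m` into
`(x² + y²)^m`, which yields the multinomial; for odd `n` the factor `x + y` supplies the one odd
exponent.
-/

/-- ν(k, n, r): the coefficient of x^{n−k−1} y^{k−1} in (x+y)^r (x²+y²)^{(n−2−r)/2}. -/
noncomputable def nu (k n r : ℕ) : ℕ :=
  MvPolynomial.coeff (Finsupp.single 0 (n - k - 1) + Finsupp.single 1 (k - 1))
    (((MvPolynomial.X 0 + MvPolynomial.X 1) ^ r *
      (MvPolynomial.X 0 ^ 2 + MvPolynomial.X 1 ^ 2) ^ ((n - 2 - r) / 2) :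
        MvPolynomial (Fin 2) ℕ))

/-- C(N; a, b): 0 unless a + b = N, else N!/(a! b!). -/
def floorMultinomial (N a b : ℕ) : ℕ := if a + b = N then N.choose a else 0

open MvPolynomial Finsupp

theorem Finsupp.single_add_single_inj_of_ne {ι M : Type*} [AddZeroClass M] {i j : ι}
    (hij : i ≠ j) {a b a' b' : M} :
    single i a + single j b = single i a' + single j b' ↔ a = a' ∧ b = b' := by
  refine ⟨fun h => ⟨?_, ?_⟩, by rintro ⟨rfl, rfl⟩; rfl⟩
  · simpa [hij.symm] using DFunLike.congr_fun h i
  · simpa [hij] using DFunLike.congr_fun h j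

namespace MvPolynomial

variable {σ R : Type*}

section CommSemiring

variable [CommSemiring R] {i j : σ}

theorem coeff_X_add_X_pow (hij : i ≠ j) (N a b : ℕ) :
    coeff (single i a + single j b) ((X i + X j : MvPolynomial σ R) ^ N) =
      floorMultinomial N a b := by
  classical
  have hterm (l : ℕ) : (X i ^ l * X j ^ (N - l) * (N.choose l : MvPolynomial σ R)) =
      monomial (single i l + single j (N - l)) (N.choose l : R) := by
    rw [X_pow_eq_monomial, X_pow_eq_monomial, ← C_eq_coe_nat, C_apply, monomial_mul,
      monomial_mul, one_mul, one_mul, add_zero]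
  simp only [add_pow, coeff_sum, hterm, coeff_monomial, single_add_single_inj_of_ne hij]
  unfold floorMultinomial
  split_ifs with hab
  · rw [Finset.sum_eq_single a (fun l _ hl => if_neg fun h => hl h.1)
      (fun ha => absurd (Finset.mem_range.2 (by omega)) ha),
      if_pos ⟨rfl, by omega⟩]
  · rw [Nat.cast_zero]
    exact Finset.sum_eq_zero fun l hl => if_neg (by rw [Finset.mem_range] at hl; omega)

theorem coeff_X_sq_add_X_sq_pow (hij : i ≠ j) (N a b : ℕ) :
    coeff (single i (2 * a) + single j (2 * b)) ((X i ^ 2 + X j ^ 2 : MvPolynomial σ R) ^ N) =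
      floorMultinomial N a b := by
  have hexp : (X i ^ 2 + X j ^ 2 : MvPolynomial σ R) ^ N = expand 2 ((X i + X j) ^ N) := by
    simp only [map_pow, map_add, expand_X]
  have hdeg : single i (2 * a) + single j (2 * b) = 2 • (single i a + single j b) := by
    simp only [smul_add, smul_single, smul_eq_mul]
  rw [hexp, hdeg, coeff_expand_smul _ two_ne_zero, coeff_X_add_X_pow hij]

end CommSemiring

section CanonicallyOrdered

variable [CommSemiring R] [PartialOrder R] [CanonicallyOrderedAdd R]

theorem coeff_mul_X_sq_add_X_sq_le (i j : σ) (p : MvPolynomial σ R) (d : σ →₀ ℕ) :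
    coeff d (p * (X i ^ 2 + X j ^ 2)) ≤ coeff d (p * (X i + X j) ^ 2) := by
  rw [add_sq, add_right_comm, mul_add p (X i ^ 2 + X j ^ 2), coeff_add]
  exact le_self_add

theorem coeff_le_coeff_X_add_X_mul_left (i j : σ) (p : MvPolynomial σ R) (d : σ →₀ ℕ) :
    coeff d p ≤ coeff (single i 1 + d) ((X i + X j) * p) := by
  rw [add_mul, coeff_add, coeff_X_mul]
  exact le_self_add

theorem coeff_le_coeff_X_add_X_mul_right (i j : σ) (p : MvPolynomial σ R) (d : σ →₀ ℕ) :
    coeff d p ≤ coeff (single j 1 + d) ((X i + X j) * p) := by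
  rw [add_comm (X i : MvPolynomial σ R)]
  exact coeff_le_coeff_X_add_X_mul_left j i p d

theorem floorMultinomial_half_le_coeff {i j : σ} (hij : i ≠ j) (a b : ℕ) :
    (floorMultinomial ((a + b) / 2) (a / 2) (b / 2) : R) ≤
      coeff (single i a + single j b)
        ((X i + X j) ^ ((a + b) % 2) * (X i ^ 2 + X j ^ 2) ^ ((a + b) / 2)) := by
  rcases Nat.even_or_odd' a with ⟨a, rfl | rfl⟩ <;> rcases Nat.even_or_odd' b with ⟨b, rfl | rfl⟩
  · rw [show (2 * a + 2 * b) % 2 = 0 by omega, show (2 * a + 2 * b) / 2 = a + b by omega,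
      pow_zero, one_mul, coeff_X_sq_add_X_sq_pow hij]
    simp
  · have hd : single i (2 * a) + single j (2 * b + 1) =
        single j 1 + (single i (2 * a) + single j (2 * b)) := by
      rw [single_add]; abel
    rw [show (2 * a + (2 * b + 1)) % 2 = 1 by omega,
      show (2 * a + (2 * b + 1)) / 2 = a + b by omega, show (2 * b + 1) / 2 = b by omega,
      show 2 * a / 2 = a by omega, pow_one, hd,
      ← coeff_X_sq_add_X_sq_pow hij]
    exact coeff_le_coeff_X_add_X_mul_right i j _ _
  · have hd : single i (2 * a + 1) + single j (2 * b) =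
        single i 1 + (single i (2 * a) + single j (2 * b)) := by
      rw [single_add]; abel
    rw [show (2 * a + 1 + 2 * b) % 2 = 1 by omega, show (2 * a + 1 + 2 * b) / 2 = a + b by omega,
      show (2 * a + 1) / 2 = a by omega, show 2 * b / 2 = b by omega, pow_one, hd,
      ← coeff_X_sq_add_X_sq_pow hij]
    exact coeff_le_coeff_X_add_X_mul_left i j _ _
  · rw [floorMultinomial, if_neg (by omega), Nat.cast_zero]
    exact zero_le

end CanonicallyOrdered

end MvPolynomial

theorem nu_le_nu_add_two {k n r : ℕ} (h : r + 2 ≤ n - 2) : nu k n r ≤ nu k n (r + 2) := by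
  rw [nu, nu, show (n - 2 - r) / 2 = (n - 2 - (r + 2)) / 2 + 1 by omega, pow_succ, ← mul_assoc,
    pow_add, mul_right_comm _ (_ ^ 2)]
  exact coeff_mul_X_sq_add_X_sq_le 0 1 _ _

theorem nu_le_nu_of_le {k n r r' : ℕ} (h : r ≤ r') (h' : r' ≤ n - 2) (hpar : r % 2 = r' % 2) :
    nu k n r ≤ nu k n r' := by
  obtain ⟨s, rfl⟩ : ∃ s, r' = r + 2 * s := ⟨(r' - r) / 2, by omega⟩
  induction s with
  | zero => exact le_rfl
  | succ s ih => exact (ih (by omega) (by omega) (by omega)).trans (nu_le_nu_add_two (by omega))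

theorem nu_sub_two {k n : ℕ} (hk : 1 ≤ k) (hkn : k < n) :
    nu k n (n - 2) = (n - 2).choose (k - 1) := by
  have h := coeff_X_add_X_pow (R := ℕ) (i := (1 : Fin 2)) (j := 0) (by decide)
    (n - 2) (k - 1) (n - k - 1)
  rw [nu, Nat.sub_self, Nat.zero_div, pow_zero, mul_one, add_comm (single 0 _),
    add_comm (X 0 : MvPolynomial (Fin 2) ℕ), h, Nat.cast_id, floorMultinomial, if_pos (by omega)]

theorem floorMultinomial_le_nu_mod_two {k n : ℕ} (hk : 1 ≤ k) (hkn : k < n) :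
    floorMultinomial ((n - 2) / 2) ((k - 1) / 2) ((n - k - 1) / 2) ≤ nu k n ((n - 2) % 2) := by
  -- `floorMultinomial` picks the exponent of the first variable, which here is `y = X 1`.
  have h := floorMultinomial_half_le_coeff (R := ℕ) (i := (1 : Fin 2)) (j := 0) (by decide)
    (k - 1) (n - k - 1)
  rw [show k - 1 + (n - k - 1) = n - 2 by omega, Nat.cast_id] at h
  rw [nu, show (n - 2 - (n - 2) % 2) / 2 = (n - 2) / 2 by omega, add_comm (single 0 _),
    add_comm (X 0 : MvPolynomial (Fin 2) ℕ), add_comm (X 0 ^ 2 : MvPolynomial (Fin 2) ℕ)]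
  exact h

theorem nu_bounds (k n r : ℕ) (hk : 2 ≤ k) (hn : k + 2 ≤ n)
    (hr : r ≤ n - 2) (hpar : r % 2 = n % 2) :
    floorMultinomial ((n - 2) / 2) ((k - 1) / 2) ((n - k - 1) / 2) ≤ nu k n r ∧
      nu k n r ≤ Nat.choose (n - 2) (k - 1) :=
  ⟨(floorMultinomial_le_nu_mod_two (by omega) (by omega)).trans
      (nu_le_nu_of_le (by omega) hr (by omega)),
    (nu_le_nu_of_le hr le_rfl (by omega)).trans_eq (nu_sub_two (by omega) (by omega))⟩
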